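/- Let p = 1, q = 0 (TASEP) and n ≥ 1. For all u, v ≥ 0 and all x, y ∈ X_{n−1}^+: Σ_{z ∈ X_{n−1}^+} p_n((0,x),(0,z); u) · p_n((0,z),(0,y); v) = p_n((0,x),(0,y); u+v). (Equivalently: because in TASEP a leftmost particle that starts at 0 and is at 0 at a later time was at 0 throughout, the transition probabilities pinned to have leftmost particle at 0 form a semigroup.) -/

import Mathlib

open MeasureTheory Set
open scoped Classical
noncomputable section

/-- Configurations of `n` particles on `ℤ⁺`: strictly increasing `n`-tuples of naturals
(`X_0` is a singleton). -/
def Conf (n : ℕ) : Type := {x : Fin n → ℕ // StrictMono x}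

instance (n : ℕ) : DecidableEq (Conf n) := by unfold Conf; infer_instance

/-- `E_n = ℓ¹(X_n)`. -/
abbrev En (n : ℕ) : Type := lp (fun _ : Conf n => ℝ) 1

/-- Real-valued indicator of a proposition. -/
def ind (P : Prop) : ℝ := if P then 1 else 0

/-- Extension of a function on configurations to all tuples, by zero. -/
def extFun {n : ℕ} (u : Conf n → ℝ) (y : Fin n → ℕ) : ℝ :=
  if h : StrictMono y then u ⟨y, h⟩ else 0

/-- The tuple `x^{i,+}`. -/
def up {n : ℕ} (x : Fin n → ℕ) (i : Fin n) : Fin n → ℕ := Function.update x i (x i + 1)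

/-- The tuple `x^{i,-}`. -/
def down {n : ℕ} (x : Fin n → ℕ) (i : Fin n) : Fin n → ℕ := Function.update x i (x i - 1)

/-- `x^{i,+} ∈ X_n`. -/
def upOK {n : ℕ} (x : Fin n → ℕ) (i : Fin n) : Prop := StrictMono (up x i)

/-- `x^{i,-} ∈ X_n`: the particle at site `x i` can move left to a nonnegative site. -/
def downOK {n : ℕ} (x : Fin n → ℕ) (i : Fin n) : Prop := 0 < x i ∧ StrictMono (down x i)

/-- The action of the `n`-particle ASEP generator on `ℤ⁺`. -/
def Qact (p q : ℝ) {n : ℕ} (u : Conf n → ℝ) (x : Conf n) : ℝ :=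
  ∑ i : Fin n,
    (p * ind (downOK x.1 i) * extFun u (down x.1 i)
     + q * ind (upOK x.1 i) * extFun u (up x.1 i)
     - p * ind (upOK x.1 i) * u x
     - q * ind (downOK x.1 i) * u x)

/-- The action of `δ` (multiplication by the indicator of `x₁ = 0`; zero on `E₀`). -/
def Dact {n : ℕ} (u : Conf n → ℝ) (x : Conf n) : ℝ :=
  ind (∃ h : 0 < n, x.1 ⟨0, h⟩ = 0) * u x

/-- Tail of a configuration. -/
def confTail {n : ℕ} (x : Conf (n+1)) : Conf n :=
  ⟨fun i => x.1 i.succ, fun _ _ h => x.2 (Fin.succ_lt_succ_iff.mpr h)⟩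

/-- The action of `A_{n+1} : E_n → E_{n+1}`, `(A F)(x₁,…,x_{n+1}) = 1{x₁=0}·F(x₂,…,x_{n+1})`. -/
def Aact {n : ℕ} (F : Conf n → ℝ) (x : Conf (n+1)) : ℝ :=
  ind (x.1 0 = 0) * F (confTail x)

/-- The action of `B_n : E_{n+1} → E_n`, `(B F)(x₁,…,x_n) = 1{x₁>0}·F(0,x₁,…,x_n)`
(for `n = 0`, `B₀ F = F(0)`). -/
def Bact {n : ℕ} (F : Conf (n+1) → ℝ) (x : Conf n) : ℝ :=
  ind (¬ ∃ h : 0 < n, x.1 ⟨0, h⟩ = 0) * extFun F (Fin.cons 0 x.1)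

/-- Laplace transform `L(s) = ∫_0^∞ e^{-st} e^{tQ} dt` of the semigroup generated by `Q`. -/
def Lop {X : Type} [NormedAddCommGroup X] [NormedSpace ℝ X] [CompleteSpace X]
    (Q : X →L[ℝ] X) (s : ℝ) : X →L[ℝ] X :=
  ∫ t in Ioi (0:ℝ), Real.exp (-(s*t)) • NormedSpace.exp (t • Q)

/-- The Bochner integral defining `L(s)` converges. -/
def LapConv {X : Type} [NormedAddCommGroup X] [NormedSpace ℝ X] [CompleteSpace X]
    (Q : X →L[ℝ] X) (s : ℝ) : Prop :=
  IntegrableOn (fun t => Real.exp (-(s*t)) • NormedSpace.exp (t • Q)) (Ioi (0:ℝ))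


/-- Configurations with `x₁ > 0` (all of `X_0` when `n = 0`). -/
def ConfP (n : ℕ) : Type := {x : Conf n // ∀ h : 0 < n, 0 < x.1 ⟨0, h⟩}

instance (n : ℕ) : DecidableEq (ConfP n) := by unfold ConfP Conf; infer_instance

/-- The configuration `(0, x)` for `x ∈ X_n⁺`. -/
def cons0 {n : ℕ} (x : ConfP n) : Conf (n+1) :=
  ⟨Fin.cons 0 x.1.1, by
    intro i j hij
    induction j using Fin.cases with
    | zero => exact absurd hij (Fin.not_lt_zero _).elim
    | succ j' =>
      induction i using Fin.cases with
      | zero =>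
        simp only [Fin.cons_zero, Fin.cons_succ]
        exact lt_of_lt_of_le (x.2 j'.pos)
          (x.1.2.monotone (by simp [Fin.le_def]))
      | succ i' =>
        simp only [Fin.cons_succ]
        exact x.1.2 (by exact_mod_cast Fin.succ_lt_succ_iff.mp hij)⟩

/-- The transition probability `p_n(x, y; t) = (e^{tQ_n} δ_y)(x)` of `n`-particle ASEP
on `ℤ⁺`. -/
def transProb {n : ℕ} (Q : En n →L[ℝ] En n) (t : ℝ) (x y : Conf n) : ℝ :=
  NormedSpace.exp (t • Q) (lp.single 1 y (1:ℝ)) x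

/-!
Under TASEP (`p = 1`, `q = 0`) particles only jump to the right, so a configuration with a
particle at `0` can only be entered from another such configuration. Dually, the closed subspace
of `ℓ¹` functions vanishing on these configurations is invariant under `Q`, hence under
`exp (t • Q)`; so `p_n((0,x), w; t) = 0` unless `w = (0,z)`. The claim is then the
Chapman–Kolmogorov identity `e^{(u+v)Q} = e^{uQ} e^{vQ}`, read entrywise on `ℓ¹`, with the vanishing
terms dropped from the sum.
-/

theorem NormedSpace.exp_apply_mem_of_mapsTo {𝕜 E : Type*} [RCLike 𝕜] [NormedAddCommGroup E]
    [NormedSpace 𝕜 E] [CompleteSpace E] {A : E →L[𝕜] E} {p : Submodule 𝕜 E}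
    (hp : IsClosed (p : Set E)) (hA : ∀ x ∈ p, A x ∈ p) {x : E} (hx : x ∈ p) :
    NormedSpace.exp A x ∈ p := by
  have hpow (n : ℕ) : (A ^ n) x ∈ p := by
    induction n with
    | zero => exact hx
    | succ n ih => rw [pow_succ', mul_apply_eq_comp]; exact hA _ ih
  rw [NormedSpace.exp_eq_tsum 𝕜, ← ContinuousLinearMap.apply_apply (𝕜 := 𝕜) x,
    (ContinuousLinearMap.apply 𝕜 E x).map_tsum (NormedSpace.expSeries_summable' A)]
  exact tsum_mem hp fun n => p.smul_mem _ (hpow n)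

theorem lp.hasSum_apply_single_mul {ι 𝕜 : Type*} [RCLike 𝕜] [DecidableEq ι]
    (T : lp (fun _ : ι => 𝕜) 1 →L[𝕜] lp (fun _ : ι => 𝕜) 1) (G : lp (fun _ : ι => 𝕜) 1)
    (x : ι) : HasSum (fun w => T (lp.single 1 w 1) x * G w) (T G x) := by
  let Φ := (lp.evalCLM 𝕜 (fun _ : ι => 𝕜) 1 x).comp T
  have hterm (w : ι) : Φ (lp.single 1 w (G w)) = T (lp.single 1 w 1) x * G w := by
    have hs : lp.single (E := fun _ : ι => 𝕜) 1 w (G w) = G w • lp.single 1 w 1 := by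
      rw [← lp.single_smul, smul_eq_mul, mul_one]
    rw [hs, map_smul, smul_eq_mul, mul_comm]
    rfl
  have h := (lp.hasSum_single ENNReal.one_ne_top G).mapL Φ
  simp only [hterm] at h
  exact h

theorem hasSum_transProb_mul_transProb {n : ℕ} (Q : En n →L[ℝ] En n) (u v : ℝ) (x y : Conf n) :
    HasSum (fun w => transProb Q u x w * transProb Q v w y) (transProb Q (u + v) x y) := by
  have hexp :
      NormedSpace.exp ((u + v) • Q) = NormedSpace.exp (u • Q) * NormedSpace.exp (v • Q) := by
    let +nondep : NormedAlgebra ℚ (En n →L[ℝ] En n) := .restrictScalars ℚ ℝ _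
    rw [add_smul]
    exact NormedSpace.exp_add_of_commute (((Commute.refl Q).smul_left u).smul_right v)
  unfold transProb
  rw [hexp, mul_apply_eq_comp]
  exact lp.hasSum_apply_single_mul _ _ _

theorem cons0_zero {n : ℕ} (x : ConfP n) : (cons0 x).1 0 = 0 := rfl

theorem cons0_injective {n : ℕ} : Function.Injective (cons0 (n := n)) := by
  intro z₁ z₂ h
  apply Subtype.ext; apply Subtype.ext; funext i
  simpa [cons0] using congrArg (fun w : Conf (n+1) => w.1 i.succ) h

theorem range_cons0 {n : ℕ} : Set.range (cons0 (n := n)) = {w | w.1 0 = 0} := by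
  refine Set.Subset.antisymm (Set.range_subset_iff.2 cons0_zero) fun w (hw : w.1 0 = 0) => ?_
  refine ⟨⟨confTail w, fun h => ?_⟩, ?_⟩
  · simpa [hw, confTail] using w.2 (Fin.succ_pos ⟨0, h⟩)
  · apply Subtype.ext
    funext i
    induction i using Fin.cases with
    | zero => exact hw.symm
    | succ j => rfl

def vanishingOnPinned (n : ℕ) : Submodule ℝ (En (n+1)) :=
  ⨅ c : {c : Conf (n+1) // c.1 0 = 0},
    LinearMap.ker (lp.evalCLM ℝ (fun _ => ℝ) 1 c.1 : En (n+1) →ₗ[ℝ] ℝ)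

theorem mem_vanishingOnPinned {n : ℕ} {F : En (n+1)} :
    F ∈ vanishingOnPinned n ↔ ∀ c : Conf (n+1), c.1 0 = 0 → F c = 0 := by
  simp only [vanishingOnPinned, Submodule.mem_iInf, LinearMap.mem_ker, Subtype.forall]
  rfl

theorem isClosed_vanishingOnPinned (n : ℕ) :
    IsClosed (vanishingOnPinned n : Set (En (n+1))) := by
  simp only [vanishingOnPinned, Submodule.coe_iInf]
  exact isClosed_iInter fun c => ContinuousLinearMap.isClosed_ker _

theorem Qact_tasep_eq_zero {n : ℕ} {F : Conf (n+1) → ℝ}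
    (hF : ∀ c : Conf (n+1), c.1 0 = 0 → F c = 0) {c : Conf (n+1)} (hc : c.1 0 = 0) :
    Qact 1 0 F c = 0 := by
  refine Finset.sum_eq_zero fun i _ => ?_
  rw [hF c hc]
  simp only [zero_mul, one_mul, mul_zero, add_zero, sub_zero]
  by_cases hd : downOK c.1 i
  · have hi : i ≠ 0 := by rintro rfl; exact hd.1.ne' hc
    have hdown : down c.1 i 0 = 0 := by rw [down, Function.update_of_ne hi.symm, hc]
    unfold extFun
    split_ifs with h
    · rw [hF ⟨_, h⟩ hdown, mul_zero]
    · rw [mul_zero]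
  · simp [ind, hd]

theorem transProb_tasep_eq_zero {m : ℕ} (Q : En (m+1) →L[ℝ] En (m+1))
    (hQ : ∀ (u : En (m+1)) (x : Conf (m+1)), Q u x = Qact 1 0 (fun z => u z) x)
    (t : ℝ) {c w : Conf (m+1)} (hc : c.1 0 = 0) (hw : w.1 0 ≠ 0) :
    transProb Q t c w = 0 := by
  have hQ_mapsTo : ∀ F ∈ vanishingOnPinned m, (t • Q) F ∈ vanishingOnPinned m := by
    intro F hF
    refine mem_vanishingOnPinned.2 fun d hd => ?_
    rw [smul_apply, lp.coeFn_smul, Pi.smul_apply, hQ,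
      Qact_tasep_eq_zero (mem_vanishingOnPinned.1 hF) hd, smul_zero]
  have hδ : lp.single 1 w (1 : ℝ) ∈ vanishingOnPinned m :=
    mem_vanishingOnPinned.2 fun d hd => lp.single_apply_ne 1 w _ fun h => hw (h ▸ hd)
  exact mem_vanishingOnPinned.1
    (NormedSpace.exp_apply_mem_of_mapsTo (isClosed_vanishingOnPinned m) hQ_mapsTo hδ) c hc

theorem tasep_pinned_semigroup_general (m : ℕ)
    (Q : En (m+1) →L[ℝ] En (m+1))
    (hQ : ∀ (u : En (m+1)) (x : Conf (m+1)), Q u x = Qact 1 0 (fun z => u z) x)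
    (u v : ℝ) (x y : ConfP m) :
    ∑' z : ConfP m,
        transProb Q u (cons0 x) (cons0 z) * transProb Q v (cons0 z) (cons0 y)
      = transProb Q (u + v) (cons0 x) (cons0 y) := by
  refine ((cons0_injective.hasSum_iff fun w hw => ?_).2
    (hasSum_transProb_mul_transProb Q u v _ _)).tsum_eq
  have hw0 : w.1 0 ≠ 0 := fun h => hw (range_cons0 ▸ h)
  rw [transProb_tasep_eq_zero Q hQ u (cons0_zero x) hw0, zero_mul]

/-- The semigroup property, in TASEP (`p = 1`, `q = 0`), of the transition probabilities
pinned to have leftmost particle at `0`:  for `u, v ≥ 0` and `x, y ∈ X_{n-1}⁺` (here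
`n = m+1 ≥ 1`),
`Σ_{z ∈ X_{n-1}⁺} p_n((0,x),(0,z);u) p_n((0,z),(0,y);v) = p_n((0,x),(0,y);u+v)`. -/
theorem tasep_pinned_semigroup (m : ℕ)
    (Q : En (m+1) →L[ℝ] En (m+1))
    (hQ : ∀ (u : En (m+1)) (x : Conf (m+1)), Q u x = Qact 1 0 (fun z => u z) x)
    (u v : ℝ) (hu : 0 ≤ u) (hv : 0 ≤ v) (x y : ConfP m) :
    ∑' z : ConfP m,
        transProb Q u (cons0 x) (cons0 z) * transProb Q v (cons0 z) (cons0 y)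
      = transProb Q (u + v) (cons0 x) (cons0 y) :=
  tasep_pinned_semigroup_general m Q hQ u v x y
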